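/- Let G be a finite simple graph containing no induced subgraph isomorphic to the claw K_{1,3}. Then the b-chromatic number of G satisfies φ(G) ≤ 2χ(G) - 1, where χ(G) is the chromatic number of G. -/
import Mathlib


open SimpleGraph

variable {V : Type*} [Fintype V] [DecidableEq V]

/-- A proper coloring of `G` with exactly `b` colors is a *b-coloring* if each color class
contains a vertex adjacent to at least one vertex of every other color class. -/
def IsBColoring (G : SimpleGraph V) (b : ℕ) (c : V → Fin b) : Prop :=
  (∀ v w, G.Adj v w → c v ≠ c w) ∧
  ∀ i : Fin b, ∃ v, c v = i ∧ ∀ j : Fin b, j ≠ c v → ∃ w, G.Adj v w ∧ c w = j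

/-- The b-chromatic number `φ(G)`: the largest `b` such that `G` admits a b-coloring
with `b` colors. -/
noncomputable def bChromaticNumber (G : SimpleGraph V) : ℕ :=
  sSup {b | ∃ c : V → Fin b, IsBColoring G b c}

/-- `G` is claw-free: `G` contains no induced subgraph isomorphic to the star
`K_{1,3}` (graph embeddings are exactly induced subgraph containments). -/
def ClawFree (G : SimpleGraph V) : Prop :=
  IsEmpty (completeBipartiteGraph (Fin 1) (Fin 3) ↪g G)

private lemma key_bound (G : SimpleGraph V) (hfree : ClawFree G)
    {n b : ℕ} (C : G.Coloring (Fin n)) {c : V → Fin b} (hc : IsBColoring G b c) :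
    b ≤ 2 * n - 1 := by
  classical
  rcases Nat.eq_zero_or_pos b with rfl | hb1
  · exact Nat.zero_le _
  obtain ⟨v, hv, hdom⟩ := hc.2 ⟨0, hb1⟩
  have hn1 : 1 ≤ n := by
    rcases Nat.eq_zero_or_pos n with rfl | h
    · exact (C v).elim0
    · exact h
  choose w hadj hcw using hdom
  -- the fiber-counting map
  let f : Fin b → Fin n := fun j => if h : j ≠ c v then C (w j h) else C v
  have hmaps : ∀ j ∈ Finset.univ.erase (c v), f j ∈ Finset.univ.erase (C v) := by
    intro j hj
    have hj' : j ≠ c v := Finset.ne_of_mem_erase hj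
    simp only [f, dif_pos hj', Finset.mem_erase, Finset.mem_univ, and_true]
    exact (C.valid (hadj j hj')).symm
  have hfib : ∀ a ∈ Finset.univ.erase (C v),
      ((Finset.univ.erase (c v)).filter (fun j => f j = a)).card ≤ 2 := by
    intro a _
    by_contra h
    push_neg at h
    rw [Finset.two_lt_card] at h
    obtain ⟨j₁, hj₁, j₂, hj₂, j₃, hj₃, h12, h13, h23⟩ := h
    simp only [Finset.mem_filter, Finset.mem_erase, Finset.mem_univ, true_and, and_true] at hj₁ hj₂ hj₃
    obtain ⟨hj₁', hf₁⟩ := hj₁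
    obtain ⟨hj₂', hf₂⟩ := hj₂
    obtain ⟨hj₃', hf₃⟩ := hj₃
    simp only [f, dif_pos hj₁'] at hf₁
    simp only [f, dif_pos hj₂'] at hf₂
    simp only [f, dif_pos hj₃'] at hf₃
    set x₁ := w j₁ hj₁'
    set x₂ := w j₂ hj₂'
    set x₃ := w j₃ hj₃'
    have hcx : c x₁ = j₁ ∧ c x₂ = j₂ ∧ c x₃ = j₃ := ⟨hcw _ _, hcw _ _, hcw _ _⟩
    have hx12 : x₁ ≠ x₂ := fun h => h12 (by rw [← hcx.1, ← hcx.2.1, h])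
    have hx13 : x₁ ≠ x₃ := fun h => h13 (by rw [← hcx.1, ← hcx.2.2, h])
    have hx23 : x₂ ≠ x₃ := fun h => h23 (by rw [← hcx.2.1, ← hcx.2.2, h])
    have hna12 : ¬ G.Adj x₁ x₂ := fun h => C.valid h (by rw [hf₁, hf₂])
    have hna13 : ¬ G.Adj x₁ x₃ := fun h => C.valid h (by rw [hf₁, hf₃])
    have hna23 : ¬ G.Adj x₂ x₃ := fun h => C.valid h (by rw [hf₂, hf₃])
    have ha1 : G.Adj v x₁ := hadj _ _
    have ha2 : G.Adj v x₂ := hadj _ _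
    have ha3 : G.Adj v x₃ := hadj _ _
    -- build a claw
    let x : Fin 3 → V := ![x₁, x₂, x₃]
    have hxadj : ∀ k, G.Adj v (x k) := by
      intro k; fin_cases k <;> assumption
    have hxne : ∀ k l : Fin 3, k ≠ l → x k ≠ x l := by
      intro k l hkl
      fin_cases k <;> fin_cases l <;>
        first
          | exact absurd rfl hkl
          | exact hx12 | exact hx13 | exact hx23
          | exact hx12.symm | exact hx13.symm | exact hx23.symm
    have hxna : ∀ k l : Fin 3, ¬ G.Adj (x k) (x l) := by
      intro k l
      fin_cases k <;> fin_cases l <;>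
        first
          | exact G.irrefl
          | exact hna12 | exact hna13 | exact hna23
          | exact fun h => hna12 h.symm
          | exact fun h => hna13 h.symm
          | exact fun h => hna23 h.symm
    let F : Sum (Fin 1) (Fin 3) → V := Sum.elim (fun _ => v) x
    have hFinj : Function.Injective F := by
      rintro (p | p) (q | q) h
      · rw [Subsingleton.elim p q]
      · exact absurd h (G.ne_of_adj (hxadj q))
      · exact absurd h.symm (G.ne_of_adj (hxadj p))
      · by_contra hpq
        exact hxne p q (fun h' => hpq (by rw [h'])) h
    refine hfree.false ⟨⟨F, hFinj⟩, ?_⟩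
    rintro (p | p) (q | q) <;>
      simp only [F, Function.Embedding.coeFn_mk, Sum.elim_inl, Sum.elim_inr,
        completeBipartiteGraph_adj, Sum.isLeft_inl, Sum.isRight_inl, Sum.isLeft_inr,
        Sum.isRight_inr]
    · simp
    · simpa using hxadj q
    · simpa using (hxadj p).symm
    · simpa using hxna p q
  have hcard := Finset.card_le_mul_card_image_of_maps_to hmaps 2 hfib
  rw [Finset.card_erase_of_mem (Finset.mem_univ _), Finset.card_erase_of_mem (Finset.mem_univ _),
    Finset.card_univ, Finset.card_univ, Fintype.card_fin, Fintype.card_fin] at hcard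
  omega

/-- If `G` is claw-free, then `φ(G) ≤ 2χ(G) - 1`. -/
theorem bChromaticNumber_le_of_clawFree (G : SimpleGraph V) (hfree : ClawFree G) :
    (bChromaticNumber G : ℕ∞) ≤ 2 * G.chromaticNumber - 1 := by
  classical
  set n := ENat.toNat G.chromaticNumber with hn
  have hcol : G.Colorable n := G.colorable_chromaticNumber_of_fintype
  have hne : G.chromaticNumber ≠ ⊤ :=
    chromaticNumber_ne_top_iff_exists.2 ⟨_, G.colorable_of_fintype⟩
  have hchrom : G.chromaticNumber = (n : ℕ∞) := (ENat.coe_toNat hne).symm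
  obtain ⟨C⟩ := hcol
  have hb : bChromaticNumber G ≤ 2 * n - 1 := by
    apply csSup_le'
    rintro b ⟨c, hc⟩
    exact key_bound G hfree C hc
  calc (bChromaticNumber G : ℕ∞) ≤ ((2 * n - 1 : ℕ) : ℕ∞) := by exact_mod_cast hb
    _ = 2 * (n : ℕ∞) - 1 := by
        push_cast [ENat.coe_sub]
        rfl
    _ = 2 * G.chromaticNumber - 1 := by rw [hchrom]
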